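/- arXiv:2501.14078 — 6 statements merged into one kernel-verified Lean document; each statement's English description precedes it below -/
import Mathlib

section
/- Conversely, if T ∈ B(H) has a left invertible quasi-isometric lifting S on K ⊇ H with S*S H ⊆ H, then A := S*S restricted to H is invertible and satisfies A ≥ T*T, A ≥ T*AT, and R[(A - T*T)^{1/2}] = R[(A - T*AT)^{1/2}]. -/
/-!
Put `W := S J - J T : H → K`. The lifting relations `S* J = J T*` and `S*S J = J A` give
`A = (SJ)*(SJ)` and `A - T*T = W*W`, and the quasi-isometry identity `S*²S² = S*S` turns this into
`A - T*AT = (SW)*(SW)`. Invertibility of `S*S` makes `S` bounded below, hence so is `SJ`, and `A`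
is invertible. Since `‖(W*W)^{1/2} x‖ = ‖W x‖` and `‖W x‖`, `‖S W x‖` dominate each other, the two
square roots have the same range by Douglas' lemma.
-/

open ContinuousLinearMap

section Hilbert

variable {𝕜 E F G : Type*} [RCLike 𝕜]
  [NormedAddCommGroup E] [InnerProductSpace 𝕜 E] [CompleteSpace E]
  [NormedAddCommGroup F] [InnerProductSpace 𝕜 F] [CompleteSpace F]
  [NormedAddCommGroup G] [InnerProductSpace 𝕜 G] [CompleteSpace G]

/-- Douglas' range inclusion. -/
theorem range_adjoint_le_range_adjoint_of_norm_le (B : E →L[𝕜] F) (C : E →L[𝕜] G) (c : ℝ)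
    (h : ∀ x, ‖B x‖ ≤ c * ‖C x‖) :
    LinearMap.range (adjoint B : F →ₗ[𝕜] E) ≤ LinearMap.range (adjoint C : G →ₗ[𝕜] E) := by
  rintro _ ⟨y, rfl⟩
  let Cₗ : E →ₗ[𝕜] G := C
  have hker : LinearMap.ker Cₗ ≤ LinearMap.ker (innerₛₗ 𝕜 y ∘ₗ (B : E →ₗ[𝕜] F)) := fun x hx => by
    have hCx : C x = 0 := hx
    have : ‖B x‖ ≤ 0 := by simpa [hCx] using h x
    simp [norm_le_zero_iff.mp this]
  let ℓ : LinearMap.range Cₗ →ₗ[𝕜] 𝕜 :=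
    (LinearMap.ker Cₗ).liftQ _ hker ∘ₗ Cₗ.quotKerEquivRange.symm
  have hℓ : ∀ x, ℓ ⟨Cₗ x, LinearMap.mem_range_self Cₗ x⟩ = inner 𝕜 y (B x) := fun x => by
    simp only [ℓ, LinearMap.coe_comp, LinearEquiv.coe_coe, Function.comp_apply,
      LinearMap.quotKerEquivRange_symm_apply_image]
    rfl
  have hbound : ∀ u, ‖ℓ u‖ ≤ c * ‖y‖ * ‖u‖ := by
    rintro ⟨_, x, rfl⟩
    calc ‖ℓ ⟨Cₗ x, _⟩‖ = ‖inner 𝕜 y (B x)‖ := by rw [hℓ]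
      _ ≤ ‖y‖ * (c * ‖C x‖) := (norm_inner_le_norm _ _).trans (by gcongr; exact h x)
      _ = c * ‖y‖ * ‖C x‖ := by ring
  -- Hahn–Banach extends `C x ↦ ⟪y, B x⟫` to `G`; its Riesz representative `z` has `C* z = B* y`.
  obtain ⟨g, hg, -⟩ := exists_extension_norm_eq _ (ℓ.mkContinuous _ hbound)
  refine ⟨(InnerProductSpace.toDual 𝕜 G).symm g, ext_inner_right 𝕜 fun x => ?_⟩
  simp only [coe_coe]
  rw [adjoint_inner_left, InnerProductSpace.toDual_symm_apply, adjoint_inner_left]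
  exact (hg ⟨Cₗ x, LinearMap.mem_range_self Cₗ x⟩).trans (hℓ x)

theorem isUnit_adjoint_comp_self_iff (U : E →L[𝕜] F) :
    IsUnit (adjoint U ∘L U) ↔ ∃ K, AntilipschitzWith K U := by
  constructor
  · rintro ⟨u, hu⟩
    let L : F →L[𝕜] E := ↑u⁻¹ ∘L adjoint U
    have hL : ∀ x, L (U x) = x := fun x => by
      rw [comp_apply, ← comp_apply (adjoint U), ← hu]
      exact DFunLike.congr_fun u.inv_mul x
    exact ⟨‖L‖₊, U.antilipschitz_of_bound fun x => by
      simpa only [hL, coe_nnnorm] using L.le_opNorm (U x)⟩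
  · intro hU
    obtain ⟨c, hc, hcU⟩ := antilipschitzWith_iff_exists_mul_le_norm.mp hU
    refine isUnit_of_forall_le_norm_inner_map _ (c := (c ^ 2).toNNReal)
      (Real.toNNReal_pos.2 (by positivity)) fun x => ?_
    rw [Real.coe_toNNReal _ (by positivity), comp_apply, adjoint_inner_left,
      inner_self_eq_norm_sq_to_K, norm_pow, RCLike.norm_ofReal, abs_norm]
    calc ‖x‖ ^ 2 * c ^ 2 = (c * ‖x‖) ^ 2 := by ring
      _ ≤ ‖U x‖ ^ 2 := by gcongr; exact hcU x

theorem adjoint_sub_comp_sub_of_adjoint_comp_eq (P Q : E →L[𝕜] F)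
    (h : adjoint P ∘L Q = adjoint Q ∘L Q) :
    adjoint (P - Q) ∘L (P - Q) = adjoint P ∘L P - adjoint Q ∘L Q := by
  have h' : adjoint Q ∘L P = adjoint Q ∘L Q := by
    simpa only [adjoint_comp, adjoint_adjoint] using congrArg adjoint h
  simp only [map_sub, sub_comp, comp_sub, h, h']
  abel

theorem LinearIsometry.adjoint_apply_self (J : E →ₗᵢ[𝕜] F) (x : E) :
    adjoint J.toContinuousLinearMap (J x) = x :=
  DFunLike.congr_fun J.adjoint_comp_self x

end Hilbert

section Sqrt

variable {E F G : Type*}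
  [NormedAddCommGroup E] [InnerProductSpace ℂ E] [CompleteSpace E]
  [NormedAddCommGroup F] [InnerProductSpace ℂ F] [CompleteSpace F]
  [NormedAddCommGroup G] [InnerProductSpace ℂ G] [CompleteSpace G]

theorem norm_sqrt_adjoint_comp_self_apply (U : E →L[ℂ] F) (x : E) :
    ‖CFC.sqrt (adjoint U ∘L U) x‖ = ‖U x‖ := by
  set R := CFC.sqrt (adjoint U ∘L U)
  have hR : adjoint R ∘L R = adjoint U ∘L U := by
    rw [(CFC.sqrt_nonneg _).isSelfAdjoint.adjoint_eq]
    exact CFC.sqrt_mul_sqrt_self _ ((nonneg_iff_isPositive _).2 (isPositive_adjoint_comp_self U))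
  rw [← sq_eq_sq₀ (norm_nonneg _) (norm_nonneg _), apply_norm_sq_eq_inner_adjoint_left, hR,
    ← apply_norm_sq_eq_inner_adjoint_left]

theorem range_sqrt_adjoint_comp_self_le (U : E →L[ℂ] F) (V : E →L[ℂ] G) (c : ℝ)
    (h : ∀ x, ‖U x‖ ≤ c * ‖V x‖) :
    LinearMap.range ((CFC.sqrt (adjoint U ∘L U) : E →L[ℂ] E) : E →ₗ[ℂ] E) ≤
      LinearMap.range ((CFC.sqrt (adjoint V ∘L V) : E →L[ℂ] E) : E →ₗ[ℂ] E) := by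
  have := range_adjoint_le_range_adjoint_of_norm_le (CFC.sqrt (adjoint U ∘L U))
    (CFC.sqrt (adjoint V ∘L V)) c (by simpa only [norm_sqrt_adjoint_comp_self_apply] using h)
  rwa [(CFC.sqrt_nonneg _).isSelfAdjoint.adjoint_eq,
    (CFC.sqrt_nonneg _).isSelfAdjoint.adjoint_eq] at this

end Sqrt

section Lifting

variable {𝕜 H K : Type*} [RCLike 𝕜]
  [NormedAddCommGroup H] [InnerProductSpace 𝕜 H] [CompleteSpace H]
  [NormedAddCommGroup K] [InnerProductSpace 𝕜 K] [CompleteSpace K]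
  {J : H →ₗᵢ[𝕜] K} {S : K →L[𝕜] K} {T A : H →L[𝕜] H}

theorem eq_adjoint_comp_self_of_compression (hA : ∀ h : H, (adjoint S ∘L S) (J h) = J (A h)) :
    A = adjoint (S ∘L J.toContinuousLinearMap) ∘L (S ∘L J.toContinuousLinearMap) := by
  ext h
  simp only [comp_apply] at hA
  simp [adjoint_comp, hA, J.adjoint_apply_self]

theorem sub_adjoint_comp_self_eq_of_lifting (hlift : ∀ h : H, adjoint S (J h) = J (adjoint T h))
    (hA : ∀ h : H, (adjoint S ∘L S) (J h) = J (A h)) :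
    A - adjoint T ∘L T =
      adjoint (S ∘L J.toContinuousLinearMap - J.toContinuousLinearMap ∘L T) ∘L
        (S ∘L J.toContinuousLinearMap - J.toContinuousLinearMap ∘L T) := by
  rw [adjoint_sub_comp_sub_of_adjoint_comp_eq, ← eq_adjoint_comp_self_of_compression hA]
  · congr 1; ext h; simp [adjoint_comp, J.adjoint_apply_self]
  · ext h; simp [adjoint_comp, J.adjoint_apply_self, hlift]

theorem sub_adjoint_conj_eq_of_lifting (hq : adjoint S ∘L adjoint S ∘L S ∘L S = adjoint S ∘L S)
    (hlift : ∀ h : H, adjoint S (J h) = J (adjoint T h))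
    (hA : ∀ h : H, (adjoint S ∘L S) (J h) = J (A h)) :
    A - adjoint T ∘L A ∘L T =
      adjoint (S ∘L (S ∘L J.toContinuousLinearMap - J.toContinuousLinearMap ∘L T)) ∘L
        (S ∘L (S ∘L J.toContinuousLinearMap - J.toContinuousLinearMap ∘L T)) := by
  have hq' : ∀ k, adjoint S (adjoint S (S (S k))) = adjoint S (S k) := DFunLike.congr_fun hq
  simp only [comp_apply] at hA
  rw [comp_sub, adjoint_sub_comp_sub_of_adjoint_comp_eq]
  · congr 1 <;> ext h <;> simp [adjoint_comp, J.adjoint_apply_self, hq', hA]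
  · ext h; simp [adjoint_comp, J.adjoint_apply_self, hlift, hA]

end Lifting

/-- If `T ∈ B(H)` has a left invertible quasi-isometric lifting `S` on `K ⊇ H`
(the inclusion `H ⊆ K` being realized by a linear isometry `J`, the lifting property by
`S* J = J T*`) with `S*S H ⊆ H`, then `A := S*S |_H` (i.e. the operator `A` on `H` with
`S*S (J h) = J (A h)`) is invertible and satisfies `A ≥ T*T`, `A ≥ T*AT` and
`R[(A - T*T)^{1/2}] = R[(A - T*AT)^{1/2}]`. -/
theorem leftInvertible_quasiIsometric_lifting_necessary
    {H : Type*} [NormedAddCommGroup H] [InnerProductSpace ℂ H] [CompleteSpace H]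
    {K : Type*} [NormedAddCommGroup K] [InnerProductSpace ℂ K] [CompleteSpace K]
    (J : H →ₗᵢ[ℂ] K) (S : K →L[ℂ] K) (T A : H →L[ℂ] H)
    (hq : adjoint S ∘L adjoint S ∘L S ∘L S = adjoint S ∘L S)
    (hinv : IsUnit (adjoint S ∘L S))
    (hlift : ∀ h : H, adjoint S (J h) = J (adjoint T h))
    (hA : ∀ h : H, (adjoint S ∘L S) (J h) = J (A h)) :
    IsUnit A ∧ (A - adjoint T ∘L T).IsPositive ∧
    (A - adjoint T ∘L A ∘L T).IsPositive ∧
    LinearMap.range ((CFC.sqrt (A - adjoint T ∘L T) : H →L[ℂ] H) : H →ₗ[ℂ] H) =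
      LinearMap.range ((CFC.sqrt (A - adjoint T ∘L A ∘L T) : H →L[ℂ] H) : H →ₗ[ℂ] H) := by
  set W := S ∘L J.toContinuousLinearMap - J.toContinuousLinearMap ∘L T
  obtain ⟨c, hS⟩ := (isUnit_adjoint_comp_self_iff S).1 hinv
  have hW : A - adjoint T ∘L T = adjoint W ∘L W := sub_adjoint_comp_self_eq_of_lifting hlift hA
  have hSW : A - adjoint T ∘L A ∘L T = adjoint (S ∘L W) ∘L (S ∘L W) :=
    sub_adjoint_conj_eq_of_lifting hq hlift hA
  refine ⟨?_, hW ▸ isPositive_adjoint_comp_self W, hSW ▸ isPositive_adjoint_comp_self _, ?_⟩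
  · rw [eq_adjoint_comp_self_of_compression hA, isUnit_adjoint_comp_self_iff]
    exact ⟨_, hS.comp J.antilipschitz⟩
  · rw [hW, hSW]
    exact le_antisymm
      (range_sqrt_adjoint_comp_self_le W (S ∘L W) c fun x => hS.le_mul_norm (map_zero S) (W x))
      (range_sqrt_adjoint_comp_self_le (S ∘L W) W ‖S‖ fun x => S.le_opNorm (W x))
end

section
/- An operator T ∈ B(H) is a quasicontraction (T*²T² ≤ T*T) if and only if there exists an invertible operator A ∈ B(H) such that T*T = T*AT ≤ A. -/
/-!
If `‖T² x‖ ≤ ‖T x‖` for all `x`, then `T` is a contraction on `U`, the closure of its range. With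
`P` the orthogonal projection onto `U` and `S = T P`, take `A = 1 + T*T - S*S`. Since `P T = T` we
have `S T = T²`, so `T* A T = T*T + T*²T² - T*²T² = T*T`, and `A - T* A T = 1 - S*S ≥ 0` because
`S` is a contraction. `A` is invertible because it is bounded below: writing `x = P x + (1 - P) x`,
`‖S x‖` is at most both `‖P x‖` and `‖T x‖ + ‖T‖ ‖(1 - P) x‖`, which gives
`‖x‖² ≤ (2‖T‖² + 2) ⟪A x, x⟫`. Conversely, conjugating `T* A T ≤ A` by `T` gives
`T*²T² = T* (T* A T) T ≤ T* A T = T*T`.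
-/

open ContinuousLinearMap

open scoped InnerProductSpace

theorem star_mul_star_mul_mul_mul_le_of_star_mul_eq {R : Type*} [NonUnitalSemiring R]
    [PartialOrder R] [StarRing R] [StarOrderedRing R] {t a : R}
    (h_eq : star t * t = star t * a * t) (h_le : star t * a * t ≤ a) :
    star t * star t * t * t ≤ star t * t := calc
  star t * star t * t * t = star t * (star t * a * t) * t := by
    rw [← h_eq]; simp only [mul_assoc]
  _ ≤ star t * a * t := star_left_conjugate_le_conjugate h_le t
  _ = star t * t := h_eq.symm

namespace ContinuousLinearMap

variable {𝕜 E : Type*} [RCLike 𝕜] [NormedAddCommGroup E] [InnerProductSpace 𝕜 E]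

theorem norm_apply_le_of_mem_closure_range {T : E →L[𝕜] E} (hT : ∀ x, ‖T (T x)‖ ≤ ‖T x‖) :
    ∀ u ∈ (LinearMap.range (T : E →ₗ[𝕜] E)).topologicalClosure, ‖T u‖ ≤ ‖u‖ :=
  closure_minimal (by rintro _ ⟨x, rfl⟩; exact hT x)
    (isClosed_le (map_continuous T).norm continuous_norm)

variable [CompleteSpace E]

theorem isPositive_adjoint_comp_self_sub_iff {F : Type*} [NormedAddCommGroup F]
    [InnerProductSpace 𝕜 F] [CompleteSpace F] (S T : E →L[𝕜] F) :
    (adjoint T ∘L T - adjoint S ∘L S).IsPositive ↔ ∀ x, ‖S x‖ ≤ ‖T x‖ := by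
  have hsa : IsSelfAdjoint (adjoint T ∘L T - adjoint S ∘L S) :=
    (isPositive_adjoint_comp_self T).isSelfAdjoint.sub
      (isPositive_adjoint_comp_self S).isSelfAdjoint
  simp only [isPositive_def', hsa, true_and, reApplyInnerSelf_apply, sub_apply, inner_sub_left,
    map_sub, ← apply_norm_sq_eq_inner_adjoint_left, sub_nonneg]
  exact forall_congr' fun x => pow_le_pow_iff_left₀ (norm_nonneg _) (norm_nonneg _) two_ne_zero

theorem isPositive_one_sub_adjoint_comp_self_iff (S : E →L[𝕜] E) :
    (1 - adjoint S ∘L S).IsPositive ↔ ∀ x, ‖S x‖ ≤ ‖x‖ := by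
  have h := isPositive_adjoint_comp_self_sub_iff S 1
  rwa [adjoint_one, one_def, id_comp, ← one_def] at h

theorem isUnit_of_forall_norm_sq_le_mul_re_inner (A : E →L[𝕜] E) {C : ℝ} (hC : 0 < C)
    (h : ∀ x, ‖x‖ ^ 2 ≤ C * RCLike.re ⟪A x, x⟫_𝕜) : IsUnit A := by
  refine isUnit_of_forall_le_norm_inner_map A (c := ⟨C⁻¹, (inv_pos.mpr hC).le⟩)
    (inv_pos.mpr hC) fun x => ?_
  calc ‖x‖ ^ 2 * C⁻¹ ≤ RCLike.re ⟪A x, x⟫_𝕜 := by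
        rw [← div_eq_mul_inv, div_le_iff₀ hC, mul_comm]; exact h x
    _ ≤ ‖⟪A x, x⟫_𝕜‖ := RCLike.re_le_norm _

theorem re_inner_one_add_sub_apply_self (S T : E →L[𝕜] E) (x : E) :
    RCLike.re ⟪(1 + adjoint T ∘L T - adjoint S ∘L S) x, x⟫_𝕜 =
      ‖x‖ ^ 2 + ‖T x‖ ^ 2 - ‖S x‖ ^ 2 := by
  simp only [sub_apply, add_apply, inner_sub_left, inner_add_left, map_sub, map_add,
    ← apply_norm_sq_eq_inner_adjoint_left, one_apply_eq_self, inner_self_eq_norm_sq]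

theorem adjoint_comp_one_add_sub_comp_eq {S T : E →L[𝕜] E} (hST : S ∘L T = T ∘L T) :
    adjoint T ∘L (1 + adjoint T ∘L T - adjoint S ∘L S) ∘L T = adjoint T ∘L T := by
  have h : adjoint T ∘L adjoint S ∘L S ∘L T = adjoint T ∘L adjoint T ∘L T ∘L T := by
    simp only [← comp_assoc, ← adjoint_comp]
    simp only [comp_assoc, hST]
  simp only [← mul_def, mul_add, add_mul, mul_sub, sub_mul, one_mul, mul_assoc] at h ⊢
  rw [h, add_sub_cancel_right]

section Projection

variable {T : E →L[𝕜] E} {U : Submodule 𝕜 E} [U.HasOrthogonalProjection]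

theorem norm_sq_le_mul_re_inner_of_forall_mem (hT : ∀ u ∈ U, ‖T u‖ ≤ ‖u‖) (x : E) :
    ‖x‖ ^ 2 ≤ (2 * ‖T‖ ^ 2 + 2) * RCLike.re ⟪(1 + adjoint T ∘L T -
      adjoint (T ∘L U.starProjection) ∘L (T ∘L U.starProjection)) x, x⟫_𝕜 := by
  rw [re_inner_one_add_sub_apply_self, comp_apply]
  have hpyth := U.norm_sq_eq_add_norm_sq_starProjection x
  have hle_proj : ‖T (U.starProjection x)‖ ≤ ‖U.starProjection x‖ :=
    hT _ (U.starProjection_apply_mem x)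
  have hle_split : ‖T (U.starProjection x)‖ ≤ ‖T x‖ + ‖T‖ * ‖Uᗮ.starProjection x‖ := calc
    ‖T (U.starProjection x)‖ = ‖T x - T (Uᗮ.starProjection x)‖ := by
      rw [← map_sub, U.starProjection_orthogonal_val, sub_sub_cancel]
    _ ≤ ‖T x‖ + ‖T‖ * ‖Uᗮ.starProjection x‖ :=
      (norm_sub_le _ _).trans (by gcongr; exact T.le_opNorm _)
  set M := ‖T‖
  set b := ‖Uᗮ.starProjection x‖
  set s := ‖T x‖
  set t := ‖T (U.starProjection x)‖
  have ht_sq : t ^ 2 ≤ 2 * s ^ 2 + 2 * M ^ 2 * b ^ 2 := by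
    nlinarith [norm_nonneg (T (U.starProjection x)), sq_nonneg (s - M * b)]
  have hb_sq : b ^ 2 ≤ ‖x‖ ^ 2 - t ^ 2 := by
    nlinarith [norm_nonneg (T (U.starProjection x))]
  nlinarith [mul_le_mul_of_nonneg_left hb_sq (sq_nonneg M), mul_nonneg (sq_nonneg M) (sq_nonneg s)]

theorem exists_isUnit_adjoint_comp_comp_eq_of_forall_mem (hTU : ∀ x, T x ∈ U)
    (hT : ∀ u ∈ U, ‖T u‖ ≤ ‖u‖) :
    ∃ A : E →L[𝕜] E, IsUnit A ∧ adjoint T ∘L T = adjoint T ∘L A ∘L T ∧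
      (A - adjoint T ∘L A ∘L T).IsPositive := by
  set S := T ∘L U.starProjection
  have hST : S ∘L T = T ∘L T := by
    ext x
    simp [S, U.starProjection_eq_self_iff.mpr (hTU x)]
  have hA := adjoint_comp_one_add_sub_comp_eq hST
  refine ⟨1 + adjoint T ∘L T - adjoint S ∘L S, ?_, hA.symm, ?_⟩
  · exact isUnit_of_forall_norm_sq_le_mul_re_inner _ (by positivity)
      (norm_sq_le_mul_re_inner_of_forall_mem hT)
  · rw [hA, add_sub_right_comm, add_sub_cancel_right, isPositive_one_sub_adjoint_comp_self_iff]
    exact fun x => (hT _ (U.starProjection_apply_mem x)).trans (U.norm_starProjection_apply_le x)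

end Projection

end ContinuousLinearMap

/-- An operator `T ∈ B(H)` is a quasicontraction (`T*²T² ≤ T*T`) if and only if
there exists an invertible operator `A ∈ B(H)` such that `T*T = T*AT ≤ A`. -/
theorem quasicontraction_iff_exists_intertwiner
    {H : Type*} [NormedAddCommGroup H] [InnerProductSpace ℂ H] [CompleteSpace H]
    (T : H →L[ℂ] H) :
    (adjoint T ∘L T - adjoint T ∘L adjoint T ∘L T ∘L T).IsPositive ↔
      ∃ A : H →L[ℂ] H, IsUnit A ∧ adjoint T ∘L T = adjoint T ∘L A ∘L T ∧
        (A - adjoint T ∘L A ∘L T).IsPositive := by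
  constructor
  · intro h
    have hT : ∀ x, ‖T (T x)‖ ≤ ‖T x‖ := (isPositive_adjoint_comp_self_sub_iff (T ∘L T) T).mp
      (by simpa only [adjoint_comp, comp_assoc] using h)
    exact exists_isUnit_adjoint_comp_comp_eq_of_forall_mem
      (U := (LinearMap.range (T : H →ₗ[ℂ] H)).topologicalClosure)
      (fun x => Submodule.le_topologicalClosure _ ⟨x, rfl⟩) (norm_apply_le_of_mem_closure_range hT)
  · rintro ⟨A, -, h_eq, h_le⟩
    -- the Loewner order, `star = adjoint` and `* = ∘L` all unfold definitionally
    exact star_mul_star_mul_mul_mul_le_of_star_mul_eq (t := T) (a := A) h_eq h_le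
end

section
/- Let Q ∈ B(K) be a quasi-isometry which is a left invertible lifting of T ∈ B(H), H ⊆ K, such that K ⊖ H ⊆ N(Q*Q - I). Then A := Q*Q restricted to H is invertible and satisfies T*T = T*AT ≤ A. -/
/-!
Write `S = Q*Q`. Since `S` is self-adjoint and fixes `K ⊖ H` pointwise, `H` reduces `S`, so `S`
commutes with the orthogonal projection onto `H`; hence `A` is invertible with inverse the
compression of `S⁻¹`. With `D = P_{K ⊖ H} Q|_H`, the lifting property splits `Q h = T h + D h`
along `K = H ⊕ (K ⊖ H)`. Any `R` reduced by `H` and fixing `K ⊖ H` then satisfies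
`P_H Q*RQ|_H = T*(P_H R|_H)T + D*D`; for `R = 1` this reads `A = T*T + D*D`, and for `R = S`,
using `Q*SQ = S`, it reads `A = T*AT + D*D`. Hence `T*T = T*AT` and `A - T*AT = D*D ≥ 0`.
-/

open ContinuousLinearMap Module.End
open scoped InnerProductSpace

namespace Submodule

variable {𝕜 E : Type*} [RCLike 𝕜] [NormedAddCommGroup E] [InnerProductSpace 𝕜 E]

section HasOrthogonalProjection

variable {U : Submodule 𝕜 E} [U.HasOrthogonalProjection]

theorem inner_eq_inner_orthogonalProjectionOnto_add (u v : E) :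
    ⟪u, v⟫_𝕜 = ⟪U.orthogonalProjectionOnto u, U.orthogonalProjectionOnto v⟫_𝕜 +
      ⟪Uᗮ.orthogonalProjectionOnto u, Uᗮ.orthogonalProjectionOnto v⟫_𝕜 := by
  rw [inner_orthogonalProjectionOnto_eq_of_mem_right,
    inner_orthogonalProjectionOnto_eq_of_mem_right, coe_orthogonalProjectionOnto_apply,
    coe_orthogonalProjectionOnto_apply, ← inner_add_right,
    starProjection_add_starProjection_orthogonal]

theorem orthogonalProjectionOnto_comp_subtypeL :
    U.orthogonalProjectionOnto ∘L U.subtypeL = ContinuousLinearMap.id 𝕜 U :=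
  ContinuousLinearMap.ext orthogonalProjectionOnto_mem_subspace_eq_self

theorem commute_starProjection_of_isSelfAdjoint [CompleteSpace E] {S : E →L[𝕜] E}
    (hS : IsSelfAdjoint S) (h : Uᗮ ∈ invtSubmodule S.toLinearMap) :
    Commute U.starProjection S := by
  refine U.isIdempotentElem_starProjection.commute_iff.2 ⟨?_, ?_⟩
  · rw [range_starProjection, ← hS.adjoint_eq]
    exact ContinuousLinearMap.mem_invtSubmodule_adjoint_iff.2 h
  · rwa [ker_starProjection]

variable {S : E →L[𝕜] E}

theorem orthogonalProjectionOnto_comp_eq_of_commute (hS : Commute U.starProjection S) :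
    U.orthogonalProjectionOnto ∘L S =
      (U.orthogonalProjectionOnto ∘L S ∘L U.subtypeL) ∘L U.orthogonalProjectionOnto := by
  ext1 x
  calc U.orthogonalProjectionOnto (S x)
      = U.orthogonalProjectionOnto (U.starProjection (S x)) :=
        (orthogonalProjectionOnto_mem_subspace_eq_self _).symm
    _ = U.orthogonalProjectionOnto (S (U.starProjection x)) :=
        congrArg U.orthogonalProjectionOnto (DFunLike.congr_fun hS.eq x)

theorem orthogonalProjectionOnto_orthogonal_comp_eq_of_commute
    (hS : Commute U.starProjection S) (hfix : ∀ k ∈ Uᗮ, S k = k) :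
    Uᗮ.orthogonalProjectionOnto ∘L S = Uᗮ.orthogonalProjectionOnto := by
  have hS' : Commute Uᗮ.starProjection S := by
    rw [starProjection_orthogonal']
    exact (Commute.one_left S).sub_left hS
  have compression_eq_id :
      Uᗮ.orthogonalProjectionOnto ∘L S ∘L Uᗮ.subtypeL = ContinuousLinearMap.id 𝕜 Uᗮ := by
    ext1 k
    simp [hfix k k.2]
  rw [orthogonalProjectionOnto_comp_eq_of_commute hS', compression_eq_id, id_comp]

theorem compression_mul_compression_of_commute (hS : Commute U.starProjection S)
    (S' : E →L[𝕜] E) :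
    (U.orthogonalProjectionOnto ∘L S ∘L U.subtypeL) *
        (U.orthogonalProjectionOnto ∘L S' ∘L U.subtypeL) =
      U.orthogonalProjectionOnto ∘L (S * S') ∘L U.subtypeL :=
  calc _ = ((U.orthogonalProjectionOnto ∘L S ∘L U.subtypeL) ∘L U.orthogonalProjectionOnto) ∘L
        S' ∘L U.subtypeL := rfl
    _ = _ := by rw [← orthogonalProjectionOnto_comp_eq_of_commute hS]; rfl

theorem isUnit_compression_of_commute (hS : IsUnit S) (hc : Commute U.starProjection S) :
    IsUnit (U.orthogonalProjectionOnto ∘L S ∘L U.subtypeL) := by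
  obtain ⟨u, rfl⟩ := hS
  have compression_one : U.orthogonalProjectionOnto ∘L 1 ∘L U.subtypeL = 1 := by
    rw [one_def, id_comp, orthogonalProjectionOnto_comp_subtypeL]; rfl
  refine isUnit_iff_exists.2 ⟨U.orthogonalProjectionOnto ∘L ↑u⁻¹ ∘L U.subtypeL, ?_, ?_⟩
  · rw [compression_mul_compression_of_commute hc, u.mul_inv, compression_one]
  · rw [compression_mul_compression_of_commute hc.units_inv_right, u.inv_mul, compression_one]

end HasOrthogonalProjection

variable [CompleteSpace E] {U : Submodule 𝕜 E} [CompleteSpace U]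

theorem compression_adjoint_comp_comp_of_lifting {Q R : E →L[𝕜] E} {T : U →L[𝕜] U}
    (hlift : U.orthogonalProjectionOnto ∘L Q = T ∘L U.orthogonalProjectionOnto)
    (hR : Commute U.starProjection R) (hfix : ∀ k ∈ Uᗮ, R k = k) :
    U.orthogonalProjectionOnto ∘L (adjoint Q ∘L R ∘L Q) ∘L U.subtypeL =
      adjoint T ∘L (U.orthogonalProjectionOnto ∘L R ∘L U.subtypeL) ∘L T +
        adjoint (Uᗮ.orthogonalProjectionOnto ∘L Q ∘L U.subtypeL) ∘L
          (Uᗮ.orthogonalProjectionOnto ∘L Q ∘L U.subtypeL) := by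
  have hT (h : U) : U.orthogonalProjectionOnto (Q h) = T h := by
    simpa using DFunLike.congr_fun hlift (h : E)
  refine ContinuousLinearMap.ext fun h => ext_inner_right 𝕜 fun h' => ?_
  calc ⟪U.orthogonalProjectionOnto (adjoint Q (R (Q h))), h'⟫_𝕜 = ⟪R (Q h), Q h'⟫_𝕜 := by
        rw [inner_orthogonalProjectionOnto_eq_of_mem_right, adjoint_inner_left]
    _ = ⟪U.orthogonalProjectionOnto (R (Q h)), U.orthogonalProjectionOnto (Q h')⟫_𝕜 +
        ⟪Uᗮ.orthogonalProjectionOnto (R (Q h)), Uᗮ.orthogonalProjectionOnto (Q h')⟫_𝕜 :=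
      inner_eq_inner_orthogonalProjectionOnto_add _ _
    _ = _ := by
      rw [← comp_apply U.orthogonalProjectionOnto R,
        orthogonalProjectionOnto_comp_eq_of_commute hR,
        ← comp_apply Uᗮ.orthogonalProjectionOnto R,
        orthogonalProjectionOnto_orthogonal_comp_eq_of_commute hR hfix]
      simp [inner_add_left, adjoint_inner_left, hT]

end Submodule

/-- Let `Q ∈ B(K)` be a quasi-isometry which is a left invertible lifting of
`T ∈ B(H)`, `H ⊆ K`, such that `K ⊖ H ⊆ N(Q*Q - I)`. Then `A := Q*Q |_H` is invertible and
satisfies `T*T = T*AT ≤ A`. -/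
theorem quasiIsometric_lifting_isometric_on_complement
    {K : Type*} [NormedAddCommGroup K] [InnerProductSpace ℂ K] [CompleteSpace K]
    (Hs : Submodule ℂ K) [CompleteSpace Hs]
    (Q : K →L[ℂ] K) (T : Hs →L[ℂ] Hs)
    (hq : adjoint Q ∘L adjoint Q ∘L Q ∘L Q = adjoint Q ∘L Q)
    (hinv : IsUnit (adjoint Q ∘L Q))
    (hlift : Hs.orthogonalProjectionOnto ∘L Q = T ∘L Hs.orthogonalProjectionOnto)
    (hker : ∀ k ∈ Hsᗮ, (adjoint Q ∘L Q) k = k) :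
    ∀ A : Hs →L[ℂ] Hs, A = Hs.orthogonalProjectionOnto ∘L (adjoint Q ∘L Q) ∘L Hs.subtypeL →
      IsUnit A ∧ adjoint T ∘L T = adjoint T ∘L A ∘L T ∧
        (A - adjoint T ∘L A ∘L T).IsPositive := by
  rintro A rfl
  have hcomm : Commute Hs.starProjection (adjoint Q ∘L Q) :=
    Hs.commute_starProjection_of_isSelfAdjoint (isPositive_adjoint_comp_self Q).isSelfAdjoint
      ((mem_invtSubmodule_iff_forall_mem_of_mem _).2 fun k hk => by
        change (adjoint Q ∘L Q) k ∈ Hsᗮ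
        rwa [hker k hk])
  have hA := Hs.compression_adjoint_comp_comp_of_lifting hlift (Commute.one_right _)
    fun _ _ => rfl
  simp only [one_def, id_comp, Submodule.orthogonalProjectionOnto_comp_subtypeL] at hA
  have hA' := Hs.compression_adjoint_comp_comp_of_lifting hlift hcomm hker
  rw [comp_assoc (adjoint Q) Q Q, hq] at hA'
  refine ⟨Hs.isUnit_compression_of_commute hinv hcomm, add_right_cancel (hA.symm.trans hA'), ?_⟩
  rw [sub_eq_iff_eq_add'.2 hA']
  exact isPositive_adjoint_comp_self _
end

section
/- For T ∈ B(H): there exists an invertible positive A ∈ B(H) such that T*T ≤ T*AT ≤ A and R(A - T*AT) = H = R(A - T*T), if and only if the spectral radius of T is strictly less than 1. -/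
/-!
If `r(T) < 1`, the series `A = ∑ₙ (Tⁿ)* Tⁿ` converges and solves the Stein equation
`A - T* A T = 1`; then `A ≥ 1`, and both defects `A - T* A T = 1` and
`A - T* T = 1 + T* (A - 1) T` are invertible.

Conversely, a positive surjective defect `D = A - T* A T` is invertible, hence `D ≥ c > 0`.
Telescoping `(Tʲ)* D Tʲ` gives `c ∑_{j<n} (Tʲ)* Tʲ ≤ A`, so these partial sums are bounded by
some `K`. Then every `(Tᵐ)* Tᵐ ≤ K`, and writing `(Tⁿ)* Tⁿ = (Tʲ)* (Tⁿ⁻ʲ)* Tⁿ⁻ʲ Tʲ` for `j < n`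
gives `n ‖Tⁿ‖² ≤ K²`; so `‖Tⁿ‖ < 1` for large `n`, and `r(T)ⁿ ≤ ‖Tⁿ‖`.
-/

open scoped NNReal ENNReal
open Filter Finset ContinuousLinearMap

section NormedAlgebra

variable {A : Type*} [NormedRing A] [NormedAlgebra ℂ A] [CompleteSpace A]

theorem spectralRadius_lt_one_of_norm_pow_lt_one [NormOneClass A] {a : A} {n : ℕ} (hn : n ≠ 0)
    (h : ‖a ^ n‖ < 1) : spectralRadius ℂ a < 1 := by
  refine (pow_lt_one_iff hn).mp ?_
  calc spectralRadius ℂ a ^ n ≤ spectralRadius ℂ (a ^ n) := spectrum.spectralRadius_pow_le a n hn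
    _ ≤ ‖a ^ n‖₊ := spectrum.spectralRadius_le_nnnorm (a ^ n)
    _ < 1 := by exact_mod_cast h

theorem eventually_norm_pow_le_of_spectralRadius_lt {a : A} {ρ : ℝ≥0}
    (h : spectralRadius ℂ a < ρ) : ∀ᶠ n in atTop, ‖a ^ n‖ ≤ (ρ : ℝ) ^ n := by
  have gelfand := spectrum.pow_nnnorm_pow_one_div_tendsto_nhds_spectralRadius a
  filter_upwards [gelfand.eventually_lt_const h, eventually_ne_atTop 0] with n hn hn0
  have := ENNReal.pow_le_pow_left (n := n) hn.le
  rw [← ENNReal.rpow_natCast, ← ENNReal.rpow_mul, one_div_mul_cancel (by exact_mod_cast hn0),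
    ENNReal.rpow_one] at this
  exact_mod_cast this

end NormedAlgebra

theorem summable_star_pow_mul_pow {A : Type*} [CStarAlgebra A] {t : A}
    (ht : spectralRadius ℂ t < 1) : Summable fun n => star (t ^ n) * t ^ n := by
  obtain ⟨ρ, hρt, hρ1⟩ := ENNReal.lt_iff_exists_nnreal_btwn.mp ht
  replace hρ1 : (ρ : ℝ) < 1 := by exact_mod_cast hρ1
  refine .of_norm_bounded_eventually_nat (g := fun n => ((ρ : ℝ) ^ 2) ^ n)
    (summable_geometric_of_lt_one (by positivity) (by nlinarith [ρ.coe_nonneg])) ?_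
  filter_upwards [eventually_norm_pow_le_of_spectralRadius_lt hρt] with n hn
  rw [CStarRing.norm_star_mul_self, ← sq, ← pow_mul, mul_comm, pow_mul]
  gcongr

section CStarAlgebra

variable {A : Type*} [CStarAlgebra A] [PartialOrder A] [StarOrderedRing A]

theorem exists_one_le_sub_star_mul_mul_eq_one {t : A} (ht : spectralRadius ℂ t < 1) :
    ∃ a : A, 1 ≤ a ∧ a - star t * a * t = 1 := by
  have hsum := summable_star_pow_mul_pow ht
  have hstein : ∑' n, star (t ^ n) * t ^ n = 1 + star t * (∑' n, star (t ^ n) * t ^ n) * t := by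
    conv_lhs => rw [hsum.tsum_eq_zero_add]
    rw [← hsum.tsum_mul_left, ← (hsum.mul_left _).tsum_mul_right]
    simp only [pow_zero, star_one, mul_one, pow_succ, star_mul, mul_assoc]
  refine ⟨_, ?_, sub_eq_iff_eq_add.2 hstein⟩
  rw [hstein]
  exact le_add_of_nonneg_right
    (star_left_conjugate_nonneg (tsum_nonneg fun n => star_mul_self_nonneg _) _)

theorem star_pow_mul_pow_le_norm_smul (t : A) {j n : ℕ} (h : j ≤ n) :
    star (t ^ n) * t ^ n ≤ ‖star (t ^ (n - j)) * t ^ (n - j)‖ • (star (t ^ j) * t ^ j) := by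
  have hn : star (t ^ n) * t ^ n = star (t ^ j) * (star (t ^ (n - j)) * t ^ (n - j)) * t ^ j := by
    rw [← Nat.sub_add_cancel h, pow_add, Nat.add_sub_cancel, star_mul]
    simp only [mul_assoc]
  rw [hn]
  exact CStarAlgebra.star_left_conjugate_le_norm_smul (.star_mul_self _)

theorem spectralRadius_lt_one_of_norm_sum_star_pow_mul_pow_le {t : A} {K : ℝ}
    (h : ∀ n, ‖∑ j ∈ range n, star (t ^ j) * t ^ j‖ ≤ K) : spectralRadius ℂ t < 1 := by
  nontriviality A
  have hK : 0 ≤ K := (norm_nonneg _).trans (h 0)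
  have hterm (m : ℕ) : ‖star (t ^ m) * t ^ m‖ ≤ K := by
    refine (CStarAlgebra.norm_le_norm_of_nonneg_of_le (star_mul_self_nonneg _) ?_).trans (h (m + 1))
    rw [sum_range_succ]
    exact le_add_of_nonneg_left (sum_nonneg fun j _ => star_mul_self_nonneg _)
  have hpow (n : ℕ) : n * ‖t ^ n‖ ^ 2 ≤ K * K := by
    have hsum : (n : ℝ) • (star (t ^ n) * t ^ n) ≤ K • ∑ j ∈ range n, star (t ^ j) * t ^ j := by
      rw [show (n : ℝ) • (star (t ^ n) * t ^ n) = ∑ j ∈ range n, star (t ^ n) * t ^ n by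
        rw [sum_const, card_range, Nat.cast_smul_eq_nsmul], smul_sum]
      refine sum_le_sum fun j hj => (star_pow_mul_pow_le_norm_smul t (mem_range.1 hj).le).trans ?_
      exact smul_le_smul_of_nonneg_right (hterm _) (star_mul_self_nonneg _)
    have := CStarAlgebra.norm_le_norm_of_nonneg_of_le
      (smul_nonneg n.cast_nonneg (star_mul_self_nonneg _)) hsum
    rw [norm_smul, norm_smul, CStarRing.norm_star_mul_self, Real.norm_natCast,
      Real.norm_of_nonneg hK] at this
    nlinarith [h n]
  obtain ⟨n, hn⟩ := exists_nat_gt (K * K)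
  have hn0 : n ≠ 0 := by
    rintro rfl
    exact (mul_self_nonneg K).not_gt (by exact_mod_cast hn)
  refine spectralRadius_lt_one_of_norm_pow_lt_one hn0 ?_
  have hnpos : (0 : ℝ) < n := by positivity
  have : ‖t ^ n‖ ^ 2 < 1 := by
    rw [← mul_lt_mul_iff_of_pos_left hnpos]; linarith [hpow n]
  exact (sq_lt_one_iff₀ (norm_nonneg _)).1 this

theorem smul_sum_star_pow_mul_pow_le {a t : A} {c : ℝ}
    (hc : algebraMap ℝ A c ≤ a - star t * a * t) (n : ℕ) :
    c • ∑ j ∈ range n, star (t ^ j) * t ^ j ≤ a - star (t ^ n) * a * t ^ n := by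
  induction n with
  | zero => simp
  | succ n ih =>
    have hstep := star_left_conjugate_le_conjugate hc (t ^ n)
    rw [sum_range_succ, smul_add, pow_succ', star_mul]
    rw [Algebra.algebraMap_eq_smul_one, mul_smul_comm, mul_one, smul_mul_assoc] at hstep
    calc _ ≤ a - star (t ^ n) * a * t ^ n + star (t ^ n) * (a - star t * a * t) * t ^ n :=
          add_le_add ih hstep
      _ = _ := by noncomm_ring

theorem spectralRadius_lt_one_of_isStrictlyPositive_sub_star_mul_mul {a t : A} (ha : 0 ≤ a)
    (hd : IsStrictlyPositive (a - star t * a * t)) : spectralRadius ℂ t < 1 := by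
  nontriviality A
  obtain ⟨c, hc, hca⟩ := (CFC.exists_pos_algebraMap_le_iff hd.isSelfAdjoint).2
    fun x hx => hd.spectrum_pos hx
  refine spectralRadius_lt_one_of_norm_sum_star_pow_mul_pow_le (K := c⁻¹ * ‖a‖) fun n => ?_
  have hsum : ∑ j ∈ range n, star (t ^ j) * t ^ j ≤ c⁻¹ • a := by
    rw [le_inv_smul_iff_of_pos hc]
    exact (smul_sum_star_pow_mul_pow_le hca n).trans
      (sub_le_self _ (star_left_conjugate_nonneg ha _))
  calc _ ≤ ‖c⁻¹ • a‖ := CStarAlgebra.norm_le_norm_of_nonneg_of_le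
          (sum_nonneg fun j _ => star_mul_self_nonneg _) hsum
    _ = c⁻¹ * ‖a‖ := by rw [norm_smul, Real.norm_of_nonneg (inv_nonneg.2 hc.le)]

end CStarAlgebra

theorem IsStarNormal.isUnit_of_range_eq_top {𝕜 E : Type*} [RCLike 𝕜] [NormedAddCommGroup E]
    [InnerProductSpace 𝕜 E] [CompleteSpace E] {T : E →L[𝕜] E} (hT : IsStarNormal T)
    (h : LinearMap.range (T : E →ₗ[𝕜] E) = ⊤) : IsUnit T := by
  refine isUnit_iff_bijective.2 ⟨LinearMap.ker_eq_bot.1 ?_, LinearMap.range_eq_top.1 h⟩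
  rw [← hT.orthogonal_range, h, Submodule.top_orthogonal_eq_bot]

theorem ContinuousLinearMap.range_eq_top_of_one_le {E : Type*} [NormedAddCommGroup E]
    [InnerProductSpace ℂ E] [CompleteSpace E] {D : E →L[ℂ] E} (h : 1 ≤ D) :
    LinearMap.range (D : E →ₗ[ℂ] E) = ⊤ :=
  LinearMap.range_eq_top.2 (isUnit_iff_bijective.1 (CStarAlgebra.isUnit_of_le 1 h)).2

/-- For `T ∈ B(H)`: there exists an invertible positive `A ∈ B(H)` such that
`T*T ≤ T*AT ≤ A` and `R(A - T*AT) = H = R(A - T*T)`, if and only if the spectral radius of `T`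
is strictly less than `1`. -/
theorem exists_surjective_defects_iff_spectralRadius_lt_one
    {H : Type*} [NormedAddCommGroup H] [InnerProductSpace ℂ H] [CompleteSpace H]
    (T : H →L[ℂ] H) :
    (∃ A : H →L[ℂ] H, A.IsPositive ∧ IsUnit A ∧
      (adjoint T ∘L A ∘L T - adjoint T ∘L T).IsPositive ∧
      (A - adjoint T ∘L A ∘L T).IsPositive ∧
      LinearMap.range ((A - adjoint T ∘L A ∘L T : H →L[ℂ] H) : H →ₗ[ℂ] H) = ⊤ ∧
      LinearMap.range ((A - adjoint T ∘L T : H →L[ℂ] H) : H →ₗ[ℂ] H) = ⊤) ↔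
    spectralRadius ℂ T < 1 := by
  simp only [← star_eq_adjoint, ← ContinuousLinearMap.mul_def, ← nonneg_iff_isPositive]
  constructor
  · rintro ⟨A, hA, -, -, hD, hDrange, -⟩
    exact spectralRadius_lt_one_of_isStrictlyPositive_sub_star_mul_mul hA
      ⟨hD, hD.isSelfAdjoint.isStarNormal.isUnit_of_range_eq_top hDrange⟩
  · intro hr
    obtain ⟨A, hA1, hstein⟩ := exists_one_le_sub_star_mul_mul_eq_one hr
    have hTAT : star T * T ≤ star T * A * T := by
      simpa using star_left_conjugate_le_conjugate hA1 T
    have hdefect : 1 ≤ A - star T * T := hstein ▸ sub_le_sub_left hTAT A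
    exact ⟨A, zero_le_one.trans hA1, CStarAlgebra.isUnit_of_le 1 hA1, sub_nonneg.2 hTAT,
      hstein ▸ zero_le_one, range_eq_top_of_one_le hstein.ge, range_eq_top_of_one_le hdefect⟩
end

section
/- Let T ∈ B(H) satisfy T*T ≤ T*²T² = T*³T³. Then W = T restricted to the closure of R(T) satisfies I ≤ W*W = W*²W², i.e., W is an expansive quasi-isometry. -/
open ContinuousLinearMap

/-! Since `‖A x‖² = re ⟪A* A x, x⟫`, the hypotheses say `‖T x‖ ≤ ‖T² x‖` and
`‖T² x‖ = ‖T³ x‖` for every `x`, i.e. both claims hold at every vector `T x` of the range.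
Both are closed conditions, so they persist on the closure of the range. -/

section NormsFromGramOperators

variable {𝕜 E F G : Type*} [RCLike 𝕜]
  [NormedAddCommGroup E] [InnerProductSpace 𝕜 E] [CompleteSpace E]
  [NormedAddCommGroup F] [InnerProductSpace 𝕜 F] [CompleteSpace F]
  [NormedAddCommGroup G] [InnerProductSpace 𝕜 G] [CompleteSpace G]

theorem ContinuousLinearMap.norm_apply_le_of_isPositive_adjoint_comp_self_sub
    {A : E →L[𝕜] F} {B : E →L[𝕜] G} (h : (adjoint A ∘L A - adjoint B ∘L B).IsPositive)
    (x : E) : ‖B x‖ ≤ ‖A x‖ := by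
  have hx := h.re_inner_nonneg_left x
  rw [sub_apply, inner_sub_left, map_sub, ← apply_norm_sq_eq_inner_adjoint_left,
    ← apply_norm_sq_eq_inner_adjoint_left, sub_nonneg] at hx
  exact (sq_le_sq₀ (norm_nonneg _) (norm_nonneg _)).mp hx

theorem ContinuousLinearMap.norm_apply_eq_of_adjoint_comp_self_eq
    {A : E →L[𝕜] F} {B : E →L[𝕜] G} (h : adjoint A ∘L A = adjoint B ∘L B) (x : E) :
    ‖A x‖ = ‖B x‖ := by
  rw [apply_norm_eq_sqrt_inner_adjoint_left, h, ← apply_norm_eq_sqrt_inner_adjoint_left]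

end NormsFromGramOperators

/-- Let `T ∈ B(H)` satisfy `T*T ≤ T*²T² = T*³T³`. Then `W = T |_{R(T)‾}`
satisfies `I ≤ W*W = W*²W²`, i.e. `W` is an expansive quasi-isometry: for every `x` in the
closure of the range of `T` one has `‖x‖ ≤ ‖T x‖` and `‖T (T x)‖ = ‖T x‖`. -/
theorem restriction_expansive_quasiIsometry
    {H : Type*} [NormedAddCommGroup H] [InnerProductSpace ℂ H] [CompleteSpace H]
    (T : H →L[ℂ] H)
    (h1 : (adjoint T ∘L adjoint T ∘L T ∘L T - adjoint T ∘L T).IsPositive)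
    (h2 : adjoint T ∘L adjoint T ∘L T ∘L T =
      adjoint T ∘L adjoint T ∘L adjoint T ∘L T ∘L T ∘L T) :
    ∀ x ∈ (LinearMap.range (T : H →ₗ[ℂ] H)).topologicalClosure, ‖x‖ ≤ ‖T x‖ ∧ ‖T (T x)‖ = ‖T x‖ := by
  have expansive_on_range (y : H) : ‖T y‖ ≤ ‖T (T y)‖ :=
    norm_apply_le_of_isPositive_adjoint_comp_self_sub (A := T ∘L T) (by rwa [adjoint_comp]) y
  have isometric_on_range (y : H) : ‖T (T (T y))‖ = ‖T (T y)‖ :=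
    norm_apply_eq_of_adjoint_comp_self_eq (A := T ∘L T ∘L T) (B := T ∘L T)
      (by simpa only [adjoint_comp, comp_assoc] using h2.symm) y
  intro x hx
  replace hx : x ∈ closure (Set.range T) := hx
  exact ⟨closure_minimal (Set.range_subset_iff.2 expansive_on_range)
      (isClosed_le continuous_norm (map_continuous T).norm) hx,
    closure_minimal (Set.range_subset_iff.2 isometric_on_range)
      (isClosed_eq (map_continuous (T ∘L T)).norm (map_continuous T).norm) hx⟩
end

section
/- If W ∈ B(M) is an expansive quasi-isometry (I ≤ W*W = W*²W²), then W*W N(W*) ⊆ N(W*), and W is isometric on R(W): W*W w = w for all w ∈ R(W). -/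
open ContinuousLinearMap

/-! Write `P = W*W - 1 ≥ 0`. The identity `W*²W² = W*W` says `W* P W = 0`; in a C*-algebra a
positive `P` with `W* P W = 0` already satisfies `P W = 0`, i.e. `W*W W = W`. Taking adjoints gives
`W* W* W = W*`, so `W*(W*W x) = W* x = 0` whenever `x ∈ N(W*)`. -/

lemma mul_eq_zero_of_star_mul_mul_eq_zero {A : Type*} [NonUnitalCStarAlgebra A] [PartialOrder A]
    [StarOrderedRing A] {a b : A} (ha : 0 ≤ a) (h : star b * a * b = 0) : a * b = 0 := by
  obtain ⟨s, rfl⟩ := CStarAlgebra.nonneg_iff_eq_star_mul_self.mp ha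
  have hsb : s * b = 0 := by
    rw [← CStarRing.star_mul_self_eq_zero_iff, star_mul, ← h]
    noncomm_ring
  rw [mul_assoc, hsb, mul_zero]

section QuasiIsometry

variable {M : Type*} [NormedAddCommGroup M] [InnerProductSpace ℂ M] [CompleteSpace M]
  {W : M →L[ℂ] M}

lemma adjoint_comp_self_comp_self_of_expansive_of_quasiIsometry
    (h1 : (adjoint W ∘L W - 1).IsPositive)
    (h2 : adjoint W ∘L adjoint W ∘L W ∘L W = adjoint W ∘L W) :
    adjoint W ∘L W ∘L W = W := by
  have hconj : star W * (adjoint W ∘L W - 1) * W = 0 := by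
    rw [star_eq_adjoint, mul_sub, sub_mul, mul_one, sub_eq_zero]
    exact h2
  have := mul_eq_zero_of_star_mul_mul_eq_zero ((nonneg_iff_isPositive _).mpr h1) hconj
  rwa [sub_mul, one_mul, sub_eq_zero] at this

lemma adjoint_comp_adjoint_comp_self_of_expansive_of_quasiIsometry
    (h1 : (adjoint W ∘L W - 1).IsPositive)
    (h2 : adjoint W ∘L adjoint W ∘L W ∘L W = adjoint W ∘L W) :
    adjoint W ∘L adjoint W ∘L W = adjoint W := by
  simpa [comp_assoc] using
    congrArg adjoint (adjoint_comp_self_comp_self_of_expansive_of_quasiIsometry h1 h2)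

end QuasiIsometry

/-- If `W ∈ B(M)` is an expansive quasi-isometry (`I ≤ W*W = W*²W²`), then
`W*W N(W*) ⊆ N(W*)`, and `W` is isometric on `R(W)`: `W*W w = w` for all `w ∈ R(W)`. -/
theorem expansive_quasiIsometry_kernel_and_range
    {M : Type*} [NormedAddCommGroup M] [InnerProductSpace ℂ M] [CompleteSpace M]
    (W : M →L[ℂ] M)
    (h1 : (adjoint W ∘L W - 1).IsPositive)
    (h2 : adjoint W ∘L adjoint W ∘L W ∘L W = adjoint W ∘L W) :
    (∀ x ∈ LinearMap.ker (adjoint W : M →ₗ[ℂ] M), (adjoint W ∘L W) x ∈ LinearMap.ker (adjoint W : M →ₗ[ℂ] M)) ∧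
    (∀ x : M, (adjoint W ∘L W) (W x) = W x) := by
  refine ⟨fun x hx => ?_, fun x => ?_⟩
  · change adjoint W x = 0 at hx
    change adjoint W (adjoint W (W x)) = 0
    rw [← hx]
    exact congrArg (· x) (adjoint_comp_adjoint_comp_self_of_expansive_of_quasiIsometry h1 h2)
  · exact congrArg (· x) (adjoint_comp_self_comp_self_of_expansive_of_quasiIsometry h1 h2)
end
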